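/- arXiv:2007.02188 — 3 statements merged into one kernel-verified Lean document; each statement's English description precedes it below -/
import Mathlib

section
/- Let {X_t}_{t∈ℤ} be the H₀-valued linear process X_t = Σ_{k=−∞}^∞ a_k(ε_{t−k}), where {a_k}_{k∈ℤ} are bounded linear operators on a real separable Hilbert space H₀ with Σ_{k=−∞}^∞ ‖a_k‖ < ∞, and {ε_t}_{t∈ℤ} are i.i.d. H₀-valued random elements with zero mean and finite second moment. Then for all n ≥ 3, E max_{1≤j≤q} ‖Σ_{t=1}^n X_t e^{−itω_j}‖² ≤ ( Σ_{k=−∞}^∞ ‖a_k‖ )² · E max_{1≤j≤q} ‖Σ_{t=1}^n ε_t e^{−itω_j}‖². -/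
/-!
The map `x ↦ max_j ‖∑_t x_t e^{-itω_j}‖` is a seminorm, and applying an operator `a` termwise
scales it by at most `‖a‖`. Hence for a finite truncation of the linear process it is bounded
pointwise by `∑_k ‖a_k‖ · max_j ‖∑_t ε_{t-k} e^{-itω_j}‖`. Every shift `(ε_{t-k})_t` of an
i.i.d. sequence has the law of `(ε_t)_t`, so Minkowski's inequality in `L²(P)` bounds the `L²`
norm of the truncated statistic by `(∑_k ‖a_k‖) · ‖max_j ‖∑_t ε_t e^{-itω_j}‖‖_{L²}`, and
Fatou's lemma passes to the full series.
-/

open MeasureTheory ProbabilityTheory Filter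
open scoped ENNReal Topology

noncomputable section

/-- Number of fundamental frequencies: `q = ⌊(n-1)/2⌋`. -/
def nfreq (n : ℕ) : ℕ := (n - 1) / 2

/-- Fundamental (Fourier) frequency `ω_j = 2πj/n`. -/
def ffreq (n j : ℕ) : ℝ := 2 * Real.pi * (j : ℝ) / (n : ℝ)

variable {H₀ : Type*} [NormedAddCommGroup H₀] [InnerProductSpace ℝ H₀]

/-- Squared complexification norm of the unnormalized DFT `∑_{t=1}^n x_t e^{-itω}`. -/
def sumNormSq (x : ℕ → H₀) (n : ℕ) (ω : ℝ) : ℝ :=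
  ‖∑ t ∈ Finset.Icc 1 n, Real.cos ((t : ℝ) * ω) • x t‖ ^ 2 +
  ‖∑ t ∈ Finset.Icc 1 n, Real.sin ((t : ℝ) * ω) • x t‖ ^ 2

/-- Maximum of `f j` over `j = 1, …, q`. -/
def maxOver (q : ℕ) (f : ℕ → ℝ) : ℝ :=
  sSup (((Finset.Icc 1 q).image f : Finset ℝ) : Set ℝ)

open Finset

lemma maxOver_zero (f : ℕ → ℝ) : maxOver 0 f = 0 := by
  simp [maxOver]

lemma maxOver_eq_sup' {q : ℕ} (hq : 1 ≤ q) (f : ℕ → ℝ) :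
    maxOver q f = (Icc 1 q).sup' (nonempty_Icc.mpr hq) f := by
  rw [sup'_eq_csSup_image, maxOver, coe_image]

lemma le_maxOver {q : ℕ} (f : ℕ → ℝ) {j : ℕ} (hj : j ∈ Icc 1 q) : f j ≤ maxOver q f :=
  le_csSup (Finset.bddAbove _) (mem_coe.mpr (mem_image_of_mem f hj))

lemma maxOver_le {q : ℕ} {f : ℕ → ℝ} {B : ℝ} (hB : 0 ≤ B) (h : ∀ j ∈ Icc 1 q, f j ≤ B) :
    maxOver q f ≤ B :=
  Real.sSup_le (by simpa only [coe_image, Set.forall_mem_image, mem_coe] using h) hB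

lemma maxOver_nonneg {q : ℕ} {f : ℕ → ℝ} (h : ∀ j ∈ Icc 1 q, 0 ≤ f j) : 0 ≤ maxOver q f :=
  Real.sSup_nonneg (by simpa only [coe_image, Set.forall_mem_image, mem_coe] using h)

lemma measurable_maxOver {α : Type*} [MeasurableSpace α] (q : ℕ) {f : ℕ → α → ℝ}
    (hf : ∀ j, Measurable (f j)) : Measurable fun x => maxOver q fun j => f j x := by
  rcases Nat.eq_zero_or_pos q with rfl | hq
  · simp [maxOver_zero]
  · simp only [maxOver_eq_sup' hq, ← Finset.sup'_apply]
    exact measurable_sup' _ fun j _ => hf j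

lemma tendsto_maxOver {q : ℕ} {f : ℕ → ℕ → ℝ} {g : ℕ → ℝ}
    (hf : ∀ j ∈ Icc 1 q, Tendsto (fun N => f N j) atTop (𝓝 (g j))) :
    Tendsto (fun N => maxOver q (f N)) atTop (𝓝 (maxOver q g)) := by
  rcases Nat.eq_zero_or_pos q with rfl | hq
  · simp [maxOver_zero]
  · simp only [maxOver_eq_sup' hq]
    exact Tendsto.finset_sup'_nhds_apply _ hf

/-- The DFT `∑_{t=1}^n x_t e^{-itω} ∈ H₀ ⊕ iH₀`, as the pair (real part, minus imaginary part)
in `H₀ × H₀` with the Hilbert (L²) product norm. -/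
def dftPair (x : ℕ → H₀) (n : ℕ) (ω : ℝ) : WithLp 2 (H₀ × H₀) :=
  WithLp.toLp 2 (∑ t ∈ Icc 1 n, Real.cos ((t : ℝ) * ω) • x t,
    ∑ t ∈ Icc 1 n, Real.sin ((t : ℝ) * ω) • x t)

lemma sumNormSq_eq_norm_dftPair_sq (x : ℕ → H₀) (n : ℕ) (ω : ℝ) :
    sumNormSq x n ω = ‖dftPair x n ω‖ ^ 2 := by
  rw [WithLp.prod_norm_sq_eq_of_L2]
  rfl

lemma dftPair_sum {ι : Type*} (F : Finset ι) (x : ι → ℕ → H₀) (n : ℕ) (ω : ℝ) :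
    dftPair (fun t => ∑ k ∈ F, x k t) n ω = ∑ k ∈ F, dftPair (x k) n ω := by
  simp only [dftPair, ← WithLp.toLp_sum, smul_sum]
  congr 1
  ext <;> simp only [Prod.fst_sum, Prod.snd_sum] <;> exact sum_comm

lemma norm_dftPair_map_le (A : H₀ →L[ℝ] H₀) (x : ℕ → H₀) (n : ℕ) (ω : ℝ) :
    ‖dftPair (fun t => A (x t)) n ω‖ ≤ ‖A‖ * ‖dftPair x n ω‖ := by
  set y := dftPair x n ω
  have hy : dftPair (fun t => A (x t)) n ω = WithLp.toLp 2 (A y.fst, A y.snd) := by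
    simp [y, dftPair, map_sum, map_smul]
  refine le_of_sq_le_sq ?_ (by positivity)
  rw [hy, mul_pow, WithLp.prod_norm_sq_eq_of_L2 y, WithLp.prod_norm_sq_eq_of_L2, mul_add]
  gcongr <;> simpa [← mul_pow] using pow_le_pow_left₀ (norm_nonneg _) (A.le_opNorm _) 2

lemma norm_dftPair_sum_map_le {ι : Type*} (F : Finset ι) (a : ι → H₀ →L[ℝ] H₀)
    (x : ι → ℕ → H₀) (n : ℕ) (ω : ℝ) :
    ‖dftPair (fun t => ∑ k ∈ F, a k (x k t)) n ω‖ ≤ ∑ k ∈ F, ‖a k‖ * ‖dftPair (x k) n ω‖ := by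
  rw [dftPair_sum]
  exact (norm_sum_le _ _).trans (sum_le_sum fun k _ => norm_dftPair_map_le (a k) (x k) n ω)

/-- `max_{1 ≤ j ≤ q} ‖∑_{t=1}^n x_t e^{-itω_j}‖`. -/
def maxDFTNorm (x : ℕ → H₀) (n q : ℕ) (ω : ℕ → ℝ) : ℝ :=
  √(maxOver q fun j => sumNormSq x n (ω j))

section maxDFTNorm

variable {x : ℕ → H₀} {n q : ℕ} {ω : ℕ → ℝ}

lemma sq_maxDFTNorm : maxDFTNorm x n q ω ^ 2 = maxOver q fun j => sumNormSq x n (ω j) :=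
  Real.sq_sqrt (maxOver_nonneg fun j _ => by rw [sumNormSq_eq_norm_dftPair_sq]; positivity)

lemma norm_dftPair_le_maxDFTNorm {j : ℕ} (hj : j ∈ Icc 1 q) :
    ‖dftPair x n (ω j)‖ ≤ maxDFTNorm x n q ω :=
  Real.le_sqrt_of_sq_le <| by
    rw [← sumNormSq_eq_norm_dftPair_sq]
    exact le_maxOver (fun j => sumNormSq x n (ω j)) hj

lemma maxDFTNorm_le {B : ℝ} (hB : 0 ≤ B) (h : ∀ j ∈ Icc 1 q, ‖dftPair x n (ω j)‖ ≤ B) :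
    maxDFTNorm x n q ω ≤ B :=
  Real.sqrt_le_iff.2 ⟨hB, maxOver_le (sq_nonneg B) fun j hj => by
    rw [sumNormSq_eq_norm_dftPair_sq]
    exact pow_le_pow_left₀ (norm_nonneg _) (h j hj) 2⟩

lemma maxDFTNorm_sum_map_le {ι : Type*} (F : Finset ι) (a : ι → H₀ →L[ℝ] H₀)
    (x : ι → ℕ → H₀) :
    maxDFTNorm (fun t => ∑ k ∈ F, a k (x k t)) n q ω ≤ ∑ k ∈ F, ‖a k‖ * maxDFTNorm (x k) n q ω :=
  maxDFTNorm_le (sum_nonneg fun _ _ => mul_nonneg (norm_nonneg _) (Real.sqrt_nonneg _))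
    fun j hj => (norm_dftPair_sum_map_le F a x n (ω j)).trans <|
      sum_le_sum fun _ _ => mul_le_mul_of_nonneg_left (norm_dftPair_le_maxDFTNorm hj) (norm_nonneg _)

lemma measurable_maxDFTNorm [MeasurableSpace H₀] [BorelSpace H₀] [SecondCountableTopology H₀]
    {α : Type*} [MeasurableSpace α] {x : α → ℕ → H₀} (hx : ∀ t, Measurable fun a => x a t) :
    Measurable fun a => maxDFTNorm (x a) n q ω :=
  (measurable_maxOver q fun j => by unfold sumNormSq; fun_prop).sqrt

lemma tendsto_maxDFTNorm {x : ℕ → ℕ → H₀} {y : ℕ → H₀}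
    (h : ∀ t, Tendsto (fun N => x N t) atTop (𝓝 (y t))) :
    Tendsto (fun N => maxDFTNorm (x N) n q ω) atTop (𝓝 (maxDFTNorm y n q ω)) := by
  refine (tendsto_maxOver fun j _ => ?_).sqrt
  unfold sumNormSq
  exact ((tendsto_finsetSum _ fun t _ => (h t).const_smul _).norm.pow 2).add
    ((tendsto_finsetSum _ fun t _ => (h t).const_smul _).norm.pow 2)

end maxDFTNorm

lemma identDistrib_comp_of_injective {Ω ι E : Type*} [MeasurableSpace Ω] [MeasurableSpace E]
    [Countable ι] {P : Measure Ω} {ε : ι → Ω → E} (hindep : iIndepFun ε P)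
    (hident : ∀ s t, IdentDistrib (ε s) (ε t) P P) {g : ι → ι} (hg : Function.Injective g) :
    IdentDistrib (fun ω i => ε (g i) ω) (fun ω i => ε i ω) P P :=
  IdentDistrib.pi (fun i => hident (g i) i) (hindep.precomp hg) hindep

lemma lintegral_ofReal_sq_eq_eLpNorm_sq {α : Type*} [MeasurableSpace α] (f : α → ℝ)
    (μ : Measure α) : ∫⁻ x, ENNReal.ofReal (f x ^ 2) ∂μ = eLpNorm f 2 μ ^ 2 := by
  have h := eLpNorm_nnreal_pow_eq_lintegral (f := f) (μ := μ) (p := 2) two_ne_zero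
  simp only [NNReal.coe_ofNat, ENNReal.rpow_two, ENNReal.coe_ofNat] at h
  rw [h]
  refine lintegral_congr fun x => ?_
  rw [← sq_abs, ← Real.norm_eq_abs, ENNReal.ofReal_pow (norm_nonneg _), ofReal_norm]

lemma eLpNorm_le_sum_mul_eLpNorm {α ι : Type*} [MeasurableSpace α] {μ : Measure α}
    {p : ℝ≥0∞} (hp : 1 ≤ p) {F : Finset ι} {c : ι → ℝ} {Z : ι → α → ℝ}
    (hZ : ∀ k ∈ F, AEStronglyMeasurable (Z k) μ) {Y : α → ℝ}
    (hY : ∀ x, ‖Y x‖ ≤ ∑ k ∈ F, c k * Z k x) :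
    eLpNorm Y p μ ≤ ∑ k ∈ F, ‖c k‖ₑ * eLpNorm (Z k) p μ := calc
  eLpNorm Y p μ ≤ eLpNorm (∑ k ∈ F, c k • Z k) p μ :=
    eLpNorm_mono_real fun x => by simpa [Finset.sum_apply] using hY x
  _ ≤ ∑ k ∈ F, eLpNorm (c k • Z k) p μ :=
    eLpNorm_sum_le (fun k hk => (hZ k hk).const_smul (c k)) hp
  _ = ∑ k ∈ F, ‖c k‖ₑ * eLpNorm (Z k) p μ := by simp only [eLpNorm_const_smul]

lemma eLpNorm_le_of_tendsto {α E : Type*} [MeasurableSpace α] [NormedAddCommGroup E]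
    {μ : Measure α} {p : ℝ≥0∞} {f : ℕ → α → E} {g : α → E}
    (hf : ∀ N, AEStronglyMeasurable (f N) μ) (hfg : ∀ x, Tendsto (fun N => f N x) atTop (𝓝 (g x)))
    {C : ℝ≥0∞} (hC : ∀ N, eLpNorm (f N) p μ ≤ C) : eLpNorm g p μ ≤ C :=
  (Lp.eLpNorm_lim_le_liminf_eLpNorm hf g (ae_of_all μ hfg)).trans
    (liminf_le_of_frequently_le' (Frequently.of_forall hC))

lemma identDistrib_maxDFTNorm_shift [MeasurableSpace H₀] [BorelSpace H₀]
    [SecondCountableTopology H₀] {Ω : Type*} [MeasurableSpace Ω] {P : Measure Ω}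
    {ε : ℤ → Ω → H₀} (hindep : iIndepFun ε P) (hident : ∀ s t, IdentDistrib (ε s) (ε t) P P)
    (n q : ℕ) (ω : ℕ → ℝ) (k : ℤ) :
    IdentDistrib (fun ω' => maxDFTNorm (fun t : ℕ => ε (t - k) ω') n q ω)
      (fun ω' => maxDFTNorm (fun t : ℕ => ε t ω') n q ω) P P :=
  (identDistrib_comp_of_injective hindep hident (sub_left_injective (b := k))).comp
    (measurable_maxDFTNorm (x := fun (y : ℤ → H₀) (t : ℕ) => y t) fun _ => measurable_pi_apply _)

theorem statement14_general
    {H₀ : Type*} [NormedAddCommGroup H₀] [InnerProductSpace ℝ H₀]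
    [SecondCountableTopology H₀]
    [MeasurableSpace H₀] [BorelSpace H₀]
    {Ω : Type*} [MeasurableSpace Ω] (P : Measure Ω)
    -- iid innovations with mean zero and finite second moment
    (ε : ℤ → Ω → H₀) (hmeas : ∀ t, Measurable (ε t))
    (hindep : iIndepFun (m := fun _ => ‹MeasurableSpace H₀›) ε P)
    (hident : ∀ s t : ℤ, IdentDistrib (ε s) (ε t) P P)
    -- the linear process X_t = ∑_k a_k(ε_{t-k}) with ∑ ‖a_k‖ < ∞
    (a : ℤ → H₀ →L[ℝ] H₀) (hasum : Summable fun k : ℤ => ‖a k‖)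
    (X : ℤ → Ω → H₀)
    (hX : ∀ (t : ℤ) ω', HasSum (fun k : ℤ => a k (ε (t - k) ω')) (X t ω')) :
    -- for all n ≥ 3:
    ∀ n : ℕ, 3 ≤ n →
      ∫⁻ ω', ENNReal.ofReal
          (maxOver (nfreq n) fun j => sumNormSq (fun t : ℕ => X (t : ℤ) ω') n (ffreq n j)) ∂P
        ≤ ENNReal.ofReal ((∑' k : ℤ, ‖a k‖) ^ 2) *
          ∫⁻ ω', ENNReal.ofReal
            (maxOver (nfreq n) fun j => sumNormSq (fun t : ℕ => ε (t : ℤ) ω') n (ffreq n j)) ∂P := by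
  intro n _
  let M : (ℕ → H₀) → ℝ := fun x => maxDFTNorm x n (nfreq n) (ffreq n)
  let Zε : Ω → ℝ := fun ω' => M fun t => ε t ω'
  have hpartial : ∀ F : Finset ℤ,
      eLpNorm (fun ω' => M fun t => ∑ k ∈ F, a k (ε (t - k) ω')) 2 P ≤
        (∑' k, ‖a k‖ₑ) * eLpNorm Zε 2 P := fun F => calc
    _ ≤ ∑ k ∈ F, ‖‖a k‖‖ₑ * eLpNorm (fun ω' => M fun t => ε (t - k) ω') 2 P :=
      eLpNorm_le_sum_mul_eLpNorm one_le_two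
        (fun k _ => (measurable_maxDFTNorm fun _ => hmeas _).aestronglyMeasurable)
        fun ω' => (Real.norm_of_nonneg (Real.sqrt_nonneg _)).trans_le
          (maxDFTNorm_sum_map_le F a fun k t => ε (t - k) ω')
    _ = (∑ k ∈ F, ‖a k‖ₑ) * eLpNorm Zε 2 P := by
      rw [sum_mul]
      refine sum_congr rfl fun k _ => ?_
      rw [enorm_norm, (identDistrib_maxDFTNorm_shift hindep hident _ _ _ k).eLpNorm_eq]
    _ ≤ (∑' k, ‖a k‖ₑ) * eLpNorm Zε 2 P := by gcongr; exact ENNReal.sum_le_tsum F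
  have hX_le : eLpNorm (fun ω' => M fun t => X t ω') 2 P ≤ (∑' k, ‖a k‖ₑ) * eLpNorm Zε 2 P :=
    eLpNorm_le_of_tendsto
      (fun N => (measurable_maxDFTNorm fun t => Finset.measurable_sum _
        fun k _ => (a k).continuous.measurable.comp (hmeas _)).aestronglyMeasurable)
      (fun ω' => tendsto_maxDFTNorm fun t => ((hX t ω').comp tendsto_Icc_neg))
      fun N => hpartial (Icc (-N : ℤ) N)
  have htsum : ENNReal.ofReal ((∑' k, ‖a k‖) ^ 2) = (∑' k, ‖a k‖ₑ) ^ 2 := by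
    rw [ENNReal.ofReal_pow (tsum_nonneg fun _ => norm_nonneg _),
      ENNReal.ofReal_tsum_of_nonneg (fun _ => norm_nonneg _) hasum]
    simp only [ofReal_norm]
  simp only [← sq_maxDFTNorm, lintegral_ofReal_sq_eq_eLpNorm_sq, htsum, ← mul_pow]
  gcongr

theorem statement14
    {H₀ : Type*} [NormedAddCommGroup H₀] [InnerProductSpace ℝ H₀]
    [CompleteSpace H₀] [SecondCountableTopology H₀]
    [MeasurableSpace H₀] [BorelSpace H₀]
    {Ω : Type*} [MeasurableSpace Ω] (P : Measure Ω) [IsProbabilityMeasure P]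
    -- iid innovations with mean zero and finite second moment
    (ε : ℤ → Ω → H₀) (hmeas : ∀ t, Measurable (ε t))
    (hindep : iIndepFun (m := fun _ => ‹MeasurableSpace H₀›) ε P)
    (hident : ∀ s t : ℤ, IdentDistrib (ε s) (ε t) P P)
    (hmean : ∫ ω', ε 0 ω' ∂P = 0)
    (hmom : ∫⁻ ω', (‖ε 0 ω'‖₊ : ℝ≥0∞) ^ (2 : ℝ) ∂P < ⊤)
    -- the linear process X_t = ∑_k a_k(ε_{t-k}) with ∑ ‖a_k‖ < ∞
    (a : ℤ → H₀ →L[ℝ] H₀) (hasum : Summable fun k : ℤ => ‖a k‖)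
    (X : ℤ → Ω → H₀)
    (hX : ∀ (t : ℤ) ω', HasSum (fun k : ℤ => a k (ε (t - k) ω')) (X t ω')) :
    -- for all n ≥ 3:
    ∀ n : ℕ, 3 ≤ n →
      ∫⁻ ω', ENNReal.ofReal
          (maxOver (nfreq n) fun j => sumNormSq (fun t : ℕ => X (t : ℤ) ω') n (ffreq n j)) ∂P
        ≤ ENNReal.ofReal ((∑' k : ℤ, ‖a k‖) ^ 2) *
          ∫⁻ ω', ENNReal.ofReal
            (maxOver (nfreq n) fun j => sumNormSq (fun t : ℕ => ε (t : ℤ) ω') n (ffreq n j)) ∂P :=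
  statement14_general P ε hmeas hindep hident a hasum X hX

end
end

section
/- Let X₁ be a random element in a real separable Hilbert space H₀ with E X₁ = 0 and E‖X₁‖^r < ∞ for some r ≥ 2, whose covariance operator Var(X₁) has strictly decreasing eigenvalues λ₁ > λ₂ > … with eigenvectors v₁, v₂, …. Let X̃₁ = X₁ 1_{{‖X₁‖ ≤ n^{1/r}}} − E[X₁ 1_{{‖X₁‖ ≤ n^{1/r}}}], and let ṽ_k, λ̃_k be the eigenvectors and eigenvalues of Var(X̃₁). With c_k = sgn⟨v_k, ṽ_k⟩, one has for each k ≥ 1: ‖ṽ_k − c_k v_k‖ ≤ (2√2/α_k) ‖Var(X₁) − Var(X̃₁)‖, where α₁ = λ₁ − λ₂ and α_k = min{λ_{k−1} − λ_k, λ_k − λ_{k+1}} for k > 1; consequently ‖ṽ_k − c_k v_k‖ = o(n^{−(1−2/r)}) as n → ∞. -/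
/-!
Statement 16: perturbation bound for the eigenvectors of the covariance operator of
the truncated variable (Lemma `lem:convrateeigen`).

Eigen-indices start at `k = 1`.  The spectral data of a covariance operator are encoded by
an orthonormal family of eigenvectors with nonincreasing eigenvalues which is complete
(any vector orthogonal to all eigenvectors is annihilated by the operator).
-/

open MeasureTheory Filter
open scoped ENNReal Topology RealInnerProductSpace

noncomputable section

variable {H₀ : Type*} [NormedAddCommGroup H₀] [InnerProductSpace ℝ H₀]

/-- Action of the covariance operator `Var(Z) = E[(Z - EZ) ⊗ (Z - EZ)]` on a vector `y`. -/
def covApply {Ω : Type*} [MeasurableSpace Ω] (P : Measure Ω) (Z : Ω → H₀) (y : H₀) : H₀ :=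
  ∫ ω', ⟪y, Z ω' - ∫ ω'', Z ω'' ∂P⟫ • (Z ω' - ∫ ω'', Z ω'' ∂P) ∂P

/-- Truncation of `X` at level `n^{1/r}`, recentered. -/
def trunc {Ω : Type*} [MeasurableSpace Ω] (P : Measure Ω) (X : Ω → H₀) (r : ℝ) (n : ℕ)
    (ω' : Ω) : H₀ :=
  (if ‖X ω'‖ ≤ (n : ℝ) ^ (1/r) then X ω' else 0) -
    ∫ ω'', (if ‖X ω''‖ ≤ (n : ℝ) ^ (1/r) then X ω'' else 0) ∂P

/-- Operator norm of the difference of the covariance operators of `X` and of its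
truncation at level `n^{1/r}`. -/
def covDiffNorm {Ω : Type*} [MeasurableSpace Ω] (P : Measure Ω) (X : Ω → H₀) (r : ℝ)
    (n : ℕ) : ℝ :=
  sSup {c : ℝ | ∃ y : H₀, ‖y‖ ≤ 1 ∧
    c = ‖covApply P X y - covApply P (trunc P X r n) y‖}

/-- Spectral gaps: `α₁ = λ₁ - λ₂` and `α_k = min(λ_{k-1} - λ_k, λ_k - λ_{k+1})` for `k > 1`. -/
def specGap (lam : ℕ → ℝ) (k : ℕ) : ℝ :=
  if k = 1 then lam 1 - lam 2 else min (lam (k - 1) - lam k) (lam k - lam (k + 1))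

/-!
Weyl's inequality, obtained from Courant–Fischer, gives `|λ̃_k - λ_k| ≤ δ` with
`δ = ‖Var X - Var X̃‖`, so `ṽ_k` is an approximate eigenvector of `Var X`:
`‖Var(X) ṽ_k - λ_k ṽ_k‖ ≤ 2δ`. In a Hilbert basis made of the `v_j` and of kernel vectors, every
component of `ṽ_k` other than the one along `v_k` is multiplied by at least `α_k`, whence
`α_k ‖ṽ_k - ⟨v_k, ṽ_k⟩ v_k‖ ≤ 2δ`; replacing `⟨v_k, ṽ_k⟩` by its sign costs a factor `√2`.

For the rate, `Var X - Var X̃ = E[X ⊗ X; ‖X‖ > a] + m ⊗ m` with `a = n^{1/r}` and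
`‖m‖ ≤ E[‖X‖; ‖X‖ > a]`; bounding `‖X‖^p ≤ a^{p-r} ‖X‖^r` on `{‖X‖ > a}` gives
`n^{1-2/r} δ ≤ T + T²` with `T = E[‖X‖^r; ‖X‖ > n^{1/r}]`, which tends to `0`.
-/

section SpecGap

variable {lam : ℕ → ℝ} {j k : ℕ}

theorem specGap_le_sub_succ (lam : ℕ → ℝ) (k : ℕ) : specGap lam k ≤ lam k - lam (k + 1) := by
  unfold specGap
  split_ifs with h
  · subst h; rfl
  · exact min_le_right _ _

theorem specGap_le_sub_pred (hk : 2 ≤ k) : specGap lam k ≤ lam (k - 1) - lam k := by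
  rw [specGap, if_neg (by omega)]
  exact min_le_left _ _

variable (hlam : StrictAntiOn lam (Set.Ici 1))
include hlam

theorem specGap_pos (hk : 1 ≤ k) : 0 < specGap lam k := by
  have hsucc : lam (k + 1) < lam k :=
    hlam (Set.mem_Ici.2 hk) (Set.mem_Ici.2 (by omega)) k.lt_succ_self
  unfold specGap
  split_ifs with h
  · subst h; linarith
  · have hpred : lam k < lam (k - 1) :=
      hlam (Set.mem_Ici.2 (by omega)) (Set.mem_Ici.2 hk) (by omega)
    exact lt_min (by linarith) (by linarith)

theorem specGap_le_abs_sub (hk : 1 ≤ k) (hj : 1 ≤ j) (hjk : j ≠ k) :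
    specGap lam k ≤ |lam j - lam k| := by
  rcases hjk.lt_or_gt with h | h
  · have hle : lam (k - 1) ≤ lam j :=
      hlam.antitoneOn (Set.mem_Ici.2 hj) (Set.mem_Ici.2 (by omega)) (by omega)
    have hlt : lam k < lam j := hlam (Set.mem_Ici.2 hj) (Set.mem_Ici.2 hk) h
    rw [abs_of_pos (by linarith)]
    linarith [specGap_le_sub_pred (lam := lam) (k := k) (by omega)]
  · have hle : lam j ≤ lam (k + 1) :=
      hlam.antitoneOn (Set.mem_Ici.2 (by omega)) (Set.mem_Ici.2 hj) h
    rw [abs_sub_comm, abs_of_pos (by linarith [hlam (Set.mem_Ici.2 hk) (Set.mem_Ici.2 hj) h])]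
    linarith [specGap_le_sub_succ lam k]

end SpecGap

theorem HilbertBasis.hasSum_inner_sq {ι E : Type*} [NormedAddCommGroup E] [InnerProductSpace ℝ E]
    (b : HilbertBasis ι ℝ E) (x : E) : HasSum (fun i => ⟪b i, x⟫ ^ 2) (‖x‖ ^ 2) := by
  have h := b.hasSum_inner_mul_inner x x
  rw [real_inner_self_eq_norm_sq] at h
  exact h.congr_fun fun i => by rw [real_inner_comm (b i) x, sq]

theorem norm_sub_sign_inner_smul_le {E : Type*} [NormedAddCommGroup E] [InnerProductSpace ℝ E]
    {u v : E} (hu : ‖u‖ = 1) (hv : ‖v‖ = 1) :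
    ‖u - Real.sign ⟪v, u⟫ • v‖ ≤ √2 * ‖u - ⟪v, u⟫ • v‖ := by
  set t := ⟪v, u⟫
  have ht : |t| ≤ 1 := by simpa [hu, hv] using abs_real_inner_le_norm v u
  have hnorm_sq : ∀ s : ℝ, ‖u - s • v‖ ^ 2 = 1 - 2 * s * t + s ^ 2 := fun s => by
    rw [norm_sub_sq_real, hu, real_inner_smul_right, real_inner_comm, norm_smul, hv,
      Real.norm_eq_abs, mul_one, sq_abs]
    ring
  refine (pow_le_pow_iff_left₀ (norm_nonneg _) (by positivity) two_ne_zero).1 ?_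
  rw [mul_pow, Real.sq_sqrt zero_le_two, hnorm_sq, hnorm_sq]
  obtain ⟨ht₁, ht₂⟩ := abs_le.1 ht
  rcases lt_trichotomy t 0 with h | h | h
  · rw [Real.sign_of_neg h]; nlinarith
  · rw [h, Real.sign_zero]; norm_num
  · rw [Real.sign_of_pos h]; nlinarith

/-- Indices start at `1`: `vec 0` and `val 0` play no role. -/
structure EigenSystem (H : Type*) [NormedAddCommGroup H] [InnerProductSpace ℝ H] where
  op : H →ₗ[ℝ] H
  vec : ℕ → H
  val : ℕ → ℝ
  isSymmetric : op.IsSymmetric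
  orthonormal_vec : Orthonormal ℝ (fun j => vec (j + 1))
  apply_vec : ∀ k, 1 ≤ k → op (vec k) = val k • vec k
  antitoneOn_val : AntitoneOn val (Set.Ici 1)
  val_nonneg : ∀ k, 1 ≤ k → 0 ≤ val k
  apply_eq_zero_of_orthogonal : ∀ y, (∀ k, 1 ≤ k → ⟪vec k, y⟫ = 0) → op y = 0

namespace EigenSystem

variable {H : Type*} [NormedAddCommGroup H] [InnerProductSpace ℝ H] (D : EigenSystem H) {k : ℕ}

theorem norm_vec (hk : 1 ≤ k) : ‖D.vec k‖ = 1 := by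
  simpa [Nat.sub_add_cancel hk] using D.orthonormal_vec.1 (k - 1)

theorem inner_vec_vec {j : ℕ} (hj : 1 ≤ j) (hk : 1 ≤ k) (hjk : j ≠ k) : ⟪D.vec j, D.vec k⟫ = 0 := by
  simpa [Nat.sub_add_cancel hj, Nat.sub_add_cancel hk] using
    D.orthonormal_vec.2 (show j - 1 ≠ k - 1 by omega)

theorem exists_hilbertBasis [CompleteSpace H] :
    ∃ (w : Set H) (b : HilbertBasis w ℝ H), ∀ i, ∃ μ : ℝ, (∀ y, ⟪b i, D.op y⟫ = μ * ⟪b i, y⟫) ∧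
      ((∃ j, 1 ≤ j ∧ b i = D.vec j ∧ μ = D.val j) ∨
        ((∀ j, 1 ≤ j → ⟪D.vec j, b i⟫ = 0) ∧ μ = 0)) := by
  obtain ⟨w, b, hsub, hb⟩ := D.orthonormal_vec.toSubtypeRange.exists_hilbertBasis_extension
  refine ⟨w, b, fun i => ?_⟩
  have inner_op (μ : ℝ) (h : D.op (b i) = μ • b i) (y : H) : ⟪b i, D.op y⟫ = μ * ⟪b i, y⟫ := by
    rw [← D.isSymmetric, h, real_inner_smul_left]
  by_cases hi : (i : H) ∈ Set.range fun j => D.vec (j + 1)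
  · obtain ⟨j, hj⟩ := hi
    have hbi : b i = D.vec (j + 1) := by rw [hb, ← hj]
    exact ⟨D.val (j + 1), inner_op _ (by rw [hbi, D.apply_vec _ (by omega)]),
      Or.inl ⟨j + 1, by omega, hbi, rfl⟩⟩
  · have horth : ∀ j, 1 ≤ j → ⟪D.vec j, b i⟫ = 0 := fun j hj => by
      have hne : (⟨D.vec j, hsub ⟨j - 1, by simp [Nat.sub_add_cancel hj]⟩⟩ : w) ≠ i := by
        rintro rfl; exact hi ⟨j - 1, by simp [Nat.sub_add_cancel hj]⟩
      simpa [hb] using b.orthonormal.2 hne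
    exact ⟨0, inner_op _ (by rw [D.apply_eq_zero_of_orthogonal _ horth, zero_smul]),
      Or.inr ⟨horth, rfl⟩⟩

theorem inner_apply_le [CompleteSpace H] (hk : 1 ≤ k) {y : H}
    (hy : ∀ j, 1 ≤ j → j < k → ⟪D.vec j, y⟫ = 0) : ⟪y, D.op y⟫ ≤ D.val k * ‖y‖ ^ 2 := by
  obtain ⟨w, b, hb⟩ := D.exists_hilbertBasis
  refine hasSum_le (fun i => ?_) (b.hasSum_inner_mul_inner y (D.op y))
    ((b.hasSum_inner_sq y).mul_left _)
  obtain ⟨μ, hμ, hcases⟩ := hb i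
  have hμk : μ ≤ D.val k ∨ ⟪b i, y⟫ = 0 := by
    rcases hcases with ⟨j, hj, hbj, rfl⟩ | ⟨-, rfl⟩
    · rcases lt_or_ge j k with hjk | hjk
      · exact Or.inr (hbj ▸ hy j hj hjk)
      · exact Or.inl (D.antitoneOn_val (Set.mem_Ici.2 hk) (Set.mem_Ici.2 hj) hjk)
    · exact Or.inl (D.val_nonneg k hk)
  rw [hμ, real_inner_comm (b i) y]
  rcases hμk with h | h
  · nlinarith [sq_nonneg ⟪b i, y⟫]
  · simp [h]

/-- Courant–Fischer: the span of `vec 1, …, vec k` meets the orthogonal complement of any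
`k - 1` vectors nontrivially. -/
theorem exists_val_mul_le_inner_apply (w : ℕ → H) (hk : 1 ≤ k) :
    ∃ y ≠ 0, (∀ j, 1 ≤ j → j < k → ⟪w j, y⟫ = 0) ∧ D.val k * ‖y‖ ^ 2 ≤ ⟪y, D.op y⟫ := by
  set e : Fin k → H := fun j => D.vec (j + 1)
  have he : Orthonormal ℝ e := D.orthonormal_vec.comp _ Fin.val_injective
  set S := Fintype.linearCombination ℝ e
  set L : (Fin k → ℝ) →ₗ[ℝ] (Fin (k - 1) → ℝ) :=
    LinearMap.pi fun i => (innerₛₗ ℝ (w (i + 1))).comp S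
  obtain ⟨c, hcL, hc⟩ := (Submodule.ne_bot_iff _).1 <| L.ker_ne_bot_of_finrank_lt <| by
    simp only [Module.finrank_fin_fun]; omega
  have hS : S c = ∑ j, c j • e j := Fintype.linearCombination_apply ℝ e c
  refine ⟨S c, fun h0 => hc (funext ((Fintype.linearIndependent_iff.1 he.linearIndependent) c
    (hS ▸ h0))), fun j hj hjk => ?_, ?_⟩
  · have := congrFun (LinearMap.mem_ker.1 hcL) ⟨j - 1, by omega⟩
    simpa [L, Nat.sub_add_cancel hj] using this
  · have hop : D.op (S c) = ∑ j, (c j * D.val (j + 1)) • e j := by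
      simp only [hS, map_sum, map_smul, e, D.apply_vec _ (Nat.succ_pos _), smul_smul]
    rw [← real_inner_self_eq_norm_sq, hop, hS, he.inner_sum, he.inner_sum, Finset.mul_sum]
    refine Finset.sum_le_sum fun j _ => ?_
    have : D.val k ≤ D.val (j + 1) :=
      D.antitoneOn_val (Set.mem_Ici.2 (by omega)) (Set.mem_Ici.2 hk) (by omega)
    simp only [conj_trivial]
    nlinarith [mul_self_nonneg (c j)]

/-- Weyl: `D.inner_apply_le` bounds the Rayleigh quotient of the Courant–Fischer vector of `D'`. -/
theorem val_le_val_add [CompleteSpace H] (D' : EigenSystem H) {δ : ℝ}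
    (hδ : ∀ y, ‖D.op y - D'.op y‖ ≤ δ * ‖y‖) (hk : 1 ≤ k) : D'.val k ≤ D.val k + δ := by
  obtain ⟨y, hy0, hy, hlow⟩ := D'.exists_val_mul_le_inner_apply D.vec hk
  have hup := D.inner_apply_le hk hy
  have hpert : ⟪y, D'.op y⟫ - ⟪y, D.op y⟫ ≤ δ * ‖y‖ ^ 2 := by
    rw [← inner_sub_right]
    calc ⟪y, D'.op y - D.op y⟫ ≤ ‖y‖ * ‖D.op y - D'.op y‖ := by
          rw [norm_sub_rev]; exact real_inner_le_norm _ _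
      _ ≤ ‖y‖ * (δ * ‖y‖) := by gcongr; exact hδ y
      _ = δ * ‖y‖ ^ 2 := by ring
  have hy2 : 0 < ‖y‖ ^ 2 := by positivity
  nlinarith

theorem abs_val_sub_val_le [CompleteSpace H] (D' : EigenSystem H) {δ : ℝ}
    (hδ : ∀ y, ‖D.op y - D'.op y‖ ≤ δ * ‖y‖) (hk : 1 ≤ k) : |D'.val k - D.val k| ≤ δ := by
  have h₁ := D.val_le_val_add D' hδ hk
  have h₂ := D'.val_le_val_add D (fun y => norm_sub_rev (D.op y) _ ▸ hδ y) hk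
  rw [abs_le]; constructor <;> linarith

/-- Davis–Kahan `sin θ` bound. -/
theorem specGap_mul_norm_sub_le [CompleteSpace H] (hval : StrictAntiOn D.val (Set.Ici 1))
    (hk : 1 ≤ k) (x : H) :
    specGap D.val k * ‖x - ⟪D.vec k, x⟫ • D.vec k‖ ≤ ‖D.op x - D.val k • x‖ := by
  set α := specGap D.val k
  set u := x - ⟪D.vec k, x⟫ • D.vec k
  set g := D.op x - D.val k • x
  have hα : 0 < α := specGap_pos hval hk
  obtain ⟨w, b, hb⟩ := D.exists_hilbertBasis
  have hterm : ∀ i, α ^ 2 * ⟪b i, u⟫ ^ 2 ≤ ⟪b i, g⟫ ^ 2 := fun i => by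
    obtain ⟨μ, hμ, hcases⟩ := hb i
    have hg : ⟪b i, g⟫ = (μ - D.val k) * ⟪b i, x⟫ := by
      rw [inner_sub_right, hμ, real_inner_smul_right]; ring
    suffices ⟪b i, u⟫ = 0 ∨ (⟪b i, u⟫ = ⟪b i, x⟫ ∧ α ≤ |μ - D.val k|) by
      rcases this with h | ⟨h, hgap⟩
      · rw [h, zero_pow two_ne_zero, mul_zero]; exact sq_nonneg _
      · rw [h, hg, mul_pow, ← sq_abs (μ - _)]
        gcongr
    have hu : ⟪b i, u⟫ = ⟪b i, x⟫ - ⟪D.vec k, x⟫ * ⟪b i, D.vec k⟫ := by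
      rw [inner_sub_right, real_inner_smul_right]
    rcases hcases with ⟨j, hj, hbj, rfl⟩ | ⟨horth, rfl⟩
    · rcases eq_or_ne j k with rfl | hjk
      · left
        rw [hu, hbj, real_inner_self_eq_norm_sq, D.norm_vec hj]; ring
      · right
        rw [hu, hbj, D.inner_vec_vec hj hk hjk]
        exact ⟨by ring, specGap_le_abs_sub hval hk hj hjk⟩
    · right
      rw [hu, real_inner_comm (D.vec k), horth k hk, zero_sub, abs_neg,
        abs_of_nonneg (D.val_nonneg k hk)]
      refine ⟨by ring, ?_⟩
      linarith [specGap_le_sub_succ D.val k, D.val_nonneg (k + 1) (by omega)]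
  have hsq : (α * ‖u‖) ^ 2 ≤ ‖g‖ ^ 2 := by
    rw [mul_pow]
    exact hasSum_le hterm ((b.hasSum_inner_sq u).mul_left _) (b.hasSum_inner_sq g)
  exact (pow_le_pow_iff_left₀ (by positivity) (norm_nonneg _) two_ne_zero).1 hsq

theorem norm_vec_sub_sign_smul_vec_le [CompleteSpace H] (D' : EigenSystem H)
    (hval : StrictAntiOn D.val (Set.Ici 1)) {δ : ℝ}
    (hδ : ∀ y, ‖D.op y - D'.op y‖ ≤ δ * ‖y‖) (hk : 1 ≤ k) :
    ‖D'.vec k - Real.sign ⟪D.vec k, D'.vec k⟫ • D.vec k‖ ≤ 2 * √2 / specGap D.val k * δ := by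
  set x := D'.vec k
  have hx : ‖x‖ = 1 := D'.norm_vec hk
  have hres : ‖D.op x - D.val k • x‖ ≤ 2 * δ := by
    have hsplit : D.op x - D.val k • x = (D.op x - D'.op x) + (D'.val k - D.val k) • x := by
      rw [D'.apply_vec k hk, sub_smul]; abel
    rw [hsplit]
    refine (norm_add_le _ _).trans ?_
    rw [norm_smul, hx, Real.norm_eq_abs, mul_one, two_mul]
    exact add_le_add ((hδ x).trans_eq (by rw [hx, mul_one])) (D.abs_val_sub_val_le D' hδ hk)
  have hα : 0 < specGap D.val k := specGap_pos hval hk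
  calc ‖x - Real.sign ⟪D.vec k, x⟫ • D.vec k‖ ≤ √2 * ‖x - ⟪D.vec k, x⟫ • D.vec k‖ :=
        norm_sub_sign_inner_smul_le hx (D.norm_vec hk)
    _ ≤ √2 * (2 * δ / specGap D.val k) := by
        gcongr
        rw [le_div_iff₀ hα, mul_comm]
        exact (D.specGap_mul_norm_sub_le hval hk x).trans hres
    _ = 2 * √2 / specGap D.val k * δ := by ring

end EigenSystem

section Covariance

variable {H : Type*} [NormedAddCommGroup H] [InnerProductSpace ℝ H] [CompleteSpace H]
  {Ω : Type*} [MeasurableSpace Ω] {P : Measure Ω} {Z : Ω → H}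

omit [CompleteSpace H] in
theorem MeasureTheory.MemLp.integrable_inner_smul_self (hZ : MemLp Z 2 P) (y : H) :
    Integrable (fun ω => ⟪y, Z ω⟫ • Z ω) P := by
  refine ((hZ.integrable_norm_pow two_ne_zero).const_mul ‖y‖).mono'
    ((aestronglyMeasurable_const.inner hZ.aestronglyMeasurable).smul hZ.aestronglyMeasurable)
    (ae_of_all _ fun ω => ?_)
  rw [norm_smul, sq, ← mul_assoc]
  gcongr
  exact norm_inner_le_norm _ _

variable [IsFiniteMeasure P]

theorem inner_covApply (hZ : MemLp Z 2 P) (x y : H) :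
    ⟪x, covApply P Z y⟫ =
      ∫ ω, ⟪y, Z ω - ∫ ω', Z ω' ∂P⟫ * ⟪x, Z ω - ∫ ω', Z ω' ∂P⟫ ∂P := by
  have hZc : MemLp (fun ω => Z ω - ∫ ω', Z ω' ∂P) 2 P := hZ.sub (memLp_const _)
  rw [covApply, ← integral_inner (hZc.integrable_inner_smul_self y)]
  simp_rw [real_inner_smul_right]

def covLin (P : Measure Ω) [IsFiniteMeasure P] (Z : Ω → H) (hZ : MemLp Z 2 P) : H →ₗ[ℝ] H where
  toFun := covApply P Z
  map_add' y₁ y₂ := by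
    have hZc : MemLp (fun ω => Z ω - ∫ ω', Z ω' ∂P) 2 P := hZ.sub (memLp_const _)
    rw [covApply, covApply, covApply, ← integral_add (hZc.integrable_inner_smul_self y₁)
      (hZc.integrable_inner_smul_self y₂)]
    simp_rw [inner_add_left, add_smul]
  map_smul' c y := by
    rw [covApply, covApply, RingHom.id_apply, ← integral_smul]
    simp_rw [real_inner_smul_left, mul_smul]

theorem covLin_isSymmetric (hZ : MemLp Z 2 P) : (covLin P Z hZ).IsSymmetric := fun x y => by
  change ⟪covApply P Z x, y⟫ = ⟪x, covApply P Z y⟫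
  rw [real_inner_comm, inner_covApply hZ, inner_covApply hZ]
  simp_rw [mul_comm]

theorem inner_covApply_self_nonneg (hZ : MemLp Z 2 P) (y : H) : 0 ≤ ⟪y, covApply P Z y⟫ := by
  rw [inner_covApply hZ]
  exact integral_nonneg fun ω => mul_self_nonneg _

def covEigenSystem (hZ : MemLp Z 2 P) (v : ℕ → H) (lam : ℕ → ℝ)
    (hnorm : ∀ k, 1 ≤ k → ‖v k‖ = 1) (horth : ∀ j k, 1 ≤ j → 1 ≤ k → j ≠ k → ⟪v j, v k⟫ = 0)
    (heig : ∀ k, 1 ≤ k → covApply P Z (v k) = lam k • v k) (hlam : AntitoneOn lam (Set.Ici 1))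
    (hcomplete : ∀ y, (∀ k, 1 ≤ k → ⟪v k, y⟫ = 0) → covApply P Z y = 0) : EigenSystem H where
  op := covLin P Z hZ
  vec := v
  val := lam
  isSymmetric := covLin_isSymmetric hZ
  orthonormal_vec := ⟨fun j => hnorm (j + 1) (by omega),
    fun {i j} hij => horth (i + 1) (j + 1) (by omega) (by omega) (by omega)⟩
  apply_vec := heig
  antitoneOn_val := hlam
  val_nonneg k hk := by
    simpa [heig k hk, real_inner_smul_right, hnorm k hk] using
      inner_covApply_self_nonneg hZ (v k)
  apply_eq_zero_of_orthogonal := hcomplete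

variable [IsProbabilityMeasure P]

theorem covApply_sub_const (hZ : Integrable Z P) (c : H) :
    covApply P (fun ω => Z ω - c) = covApply P Z := by
  have hmean : ∫ ω, (Z ω - c) ∂P = (∫ ω, Z ω ∂P) - c := by
    rw [integral_sub hZ (integrable_const c), integral_const, probReal_univ, one_smul]
  ext y
  simp only [covApply, hmean, sub_sub_sub_cancel_right]

theorem covApply_eq_integral_sub (hZ : MemLp Z 2 P) (y : H) :
    covApply P Z y = (∫ ω, ⟪y, Z ω⟫ • Z ω ∂P) - ⟪y, ∫ ω, Z ω ∂P⟫ • ∫ ω, Z ω ∂P := by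
  set m := ∫ ω, Z ω ∂P
  have hZ1 : Integrable Z P := hZ.integrable one_le_two
  have hZm : Integrable (fun ω => Z ω - m) P := hZ1.sub (integrable_const m)
  have hZZ := hZ.integrable_inner_smul_self y
  have hmZ : Integrable (fun ω => ⟪y, m⟫ • Z ω) P := hZ1.smul _
  have hcentered : ∫ ω, ⟪y, Z ω - m⟫ ∂P = 0 := by
    rw [integral_inner hZm, integral_sub hZ1 (integrable_const m), integral_const, probReal_univ,
      one_smul, sub_self, inner_zero_right]
  calc covApply P Z y = ∫ ω, (⟪y, Z ω - m⟫ • Z ω - ⟪y, Z ω - m⟫ • m) ∂P := by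
        simp_rw [covApply, smul_sub]; rfl
    _ = ∫ ω, (⟪y, Z ω⟫ • Z ω - ⟪y, m⟫ • Z ω) ∂P := by
        have hA : Integrable (fun ω => ⟪y, Z ω - m⟫ • Z ω) P := by
          refine (hZZ.sub hmZ).congr (ae_of_all _ fun ω => ?_)
          simp only [Pi.sub_apply, inner_sub_right, sub_smul]
        rw [integral_sub hA ((hZm.const_inner y).smul_const m), integral_smul_const, hcentered,
          zero_smul, sub_zero]
        simp_rw [inner_sub_right, sub_smul]
    _ = (∫ ω, ⟪y, Z ω⟫ • Z ω ∂P) - ⟪y, m⟫ • m := by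
        rw [integral_sub hZZ hmZ, integral_smul]

/-- `∫ ω in s, Z ω ∂P` is minus the mean of `Z - 1_s Z`, whence the `+` sign. -/
theorem covApply_sub_covApply_sub_indicator (hZ : MemLp Z 2 P)
    (hmean : ∫ ω, Z ω ∂P = 0) {s : Set Ω} (hs : MeasurableSet s) (y : H) :
    covApply P Z y - covApply P (fun ω => Z ω - s.indicator Z ω) y =
      (∫ ω in s, ⟪y, Z ω⟫ • Z ω ∂P) + ⟪y, ∫ ω in s, Z ω ∂P⟫ • ∫ ω in s, Z ω ∂P := by
  have hY2 : MemLp (fun ω => Z ω - s.indicator Z ω) 2 P := hZ.sub (hZ.indicator hs)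
  have hZ₁ : Integrable Z P := hZ.integrable one_le_two
  have hquad : ∀ ω, ⟪y, Z ω⟫ • Z ω - ⟪y, Z ω - s.indicator Z ω⟫ • (Z ω - s.indicator Z ω) =
      s.indicator (fun ω => ⟪y, Z ω⟫ • Z ω) ω := fun ω => by
    by_cases h : ω ∈ s <;> simp [h]
  have hbulk : (∫ ω, ⟪y, Z ω⟫ • Z ω ∂P) -
      ∫ ω, ⟪y, Z ω - s.indicator Z ω⟫ • (Z ω - s.indicator Z ω) ∂P =
      ∫ ω in s, ⟪y, Z ω⟫ • Z ω ∂P := by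
    rw [← integral_sub (hZ.integrable_inner_smul_self y) (hY2.integrable_inner_smul_self y),
      integral_congr_ae (ae_of_all _ hquad), integral_indicator hs]
  have hm : ∫ ω, (Z ω - s.indicator Z ω) ∂P = -∫ ω in s, Z ω ∂P := by
    rw [integral_sub hZ₁ (hZ₁.indicator hs), integral_indicator hs, hmean, zero_sub]
  rw [covApply_eq_integral_sub hZ, covApply_eq_integral_sub hY2, hmean, hm, ← hbulk]
  simp only [inner_zero_right, zero_smul, inner_neg_right, neg_smul_neg]
  abel

end Covariance

theorem truncation_eq_sub_indicator {Ω H : Type*} [NormedAddCommGroup H] (X : Ω → H) (a : ℝ) :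
    (fun ω => if ‖X ω‖ ≤ a then X ω else 0) = fun ω => X ω - {ω | a < ‖X ω‖}.indicator X ω := by
  ext ω
  by_cases h : ‖X ω‖ ≤ a
  · simp [h, Set.indicator_of_notMem, not_lt.2 h]
  · simp [h, Set.indicator_of_mem, lt_of_not_ge h]

section Truncation

variable {H : Type*} [NormedAddCommGroup H] {Ω : Type*} [MeasurableSpace Ω] {P : Measure Ω}
  {X : Ω → H}

def tailMoment (P : Measure Ω) (X : Ω → H) (p a : ℝ) : ℝ :=
  ∫ ω in {ω | a < ‖X ω‖}, ‖X ω‖ ^ p ∂P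

theorem tailMoment_nonneg (p a : ℝ) : 0 ≤ tailMoment P X p a :=
  integral_nonneg fun ω => by positivity

variable [MeasurableSpace H] [BorelSpace H]

theorem tailMoment_le_rpow_mul (hX : Measurable X) {p r a : ℝ}
    (hXr : Integrable (fun ω => ‖X ω‖ ^ r) P) (hpr : p ≤ r) (ha : 0 < a) :
    tailMoment P X p a ≤ a ^ (p - r) * tailMoment P X r a := by
  rw [tailMoment, tailMoment, ← integral_const_mul]
  refine integral_mono_of_nonneg (ae_of_all _ fun ω => by positivity)
    (hXr.integrableOn.const_mul _) ?_
  filter_upwards [ae_restrict_mem (measurableSet_lt measurable_const hX.norm)] with ω hω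
  have hpos : 0 < ‖X ω‖ := ha.trans hω
  calc ‖X ω‖ ^ p = ‖X ω‖ ^ (p - r) * ‖X ω‖ ^ r := by rw [← Real.rpow_add hpos, sub_add_cancel]
    _ ≤ a ^ (p - r) * ‖X ω‖ ^ r :=
        mul_le_mul_of_nonneg_right (Real.rpow_le_rpow_of_nonpos ha hω.le (sub_nonpos.2 hpr))
          (by positivity)

theorem tendsto_tailMoment_atTop (hX : Measurable X) {r : ℝ}
    (hXr : Integrable (fun ω => ‖X ω‖ ^ r) P) : Tendsto (tailMoment P X r) atTop (𝓝 0) := by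
  have h := tendsto_setIntegral_of_antitone (μ := P) (f := fun ω => ‖X ω‖ ^ r)
    (s := fun a : ℝ => {ω | a < ‖X ω‖}) (fun a => measurableSet_lt measurable_const hX.norm)
    (fun a b hab ω hω => hab.trans_lt hω) ⟨0, hXr.integrableOn⟩
  have hempty : ⋂ a : ℝ, {ω | a < ‖X ω‖} = ∅ :=
    Set.eq_empty_of_forall_notMem fun ω hω =>
      lt_irrefl _ (show ‖X ω‖ < ‖X ω‖ from Set.mem_iInter.1 hω _)
  rwa [hempty, setIntegral_empty] at h

theorem rpow_mul_tailMoment_add_sq_le (hX : Measurable X) {r a : ℝ}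
    (hXr : Integrable (fun ω => ‖X ω‖ ^ r) P) (hr : 2 ≤ r) (ha : 1 ≤ a) :
    a ^ (r - 2) * (tailMoment P X 2 a + tailMoment P X 1 a ^ 2) ≤
      tailMoment P X r a + tailMoment P X r a ^ 2 := by
  have ha0 : 0 < a := by linarith
  set T := tailMoment P X r a
  have h₂ := tailMoment_le_rpow_mul hX hXr hr ha0
  have h₁ := tailMoment_le_rpow_mul hX hXr (by linarith : (1 : ℝ) ≤ r) ha0
  have e₂ : a ^ (r - 2) * a ^ (2 - r) = 1 := by rw [← Real.rpow_add ha0]; simp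
  have e₁ : a ^ (r - 2) * (a ^ (1 - r)) ^ 2 = a ^ (-r) := by
    rw [← Real.rpow_natCast, ← Real.rpow_mul ha0.le, ← Real.rpow_add ha0]
    congr 1; push_cast; ring
  calc a ^ (r - 2) * (tailMoment P X 2 a + tailMoment P X 1 a ^ 2)
      ≤ a ^ (r - 2) * (a ^ (2 - r) * T + (a ^ (1 - r) * T) ^ 2) := by
        have hT₁ := tailMoment_nonneg (P := P) (X := X) 1 a
        gcongr
    _ = T + a ^ (-r) * T ^ 2 := by rw [← e₁, mul_add, ← mul_assoc, e₂]; ring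
    _ ≤ T + T ^ 2 := by
        gcongr
        exact mul_le_of_le_one_left (sq_nonneg T)
          (Real.rpow_le_one_of_one_le_of_nonpos ha (by linarith))

theorem memLp_truncation (hX : Measurable X) (hX2 : MemLp X 2 P) (a : ℝ) :
    MemLp (fun ω => if ‖X ω‖ ≤ a then X ω else 0) 2 P :=
  truncation_eq_sub_indicator X a ▸
    hX2.sub (hX2.indicator (measurableSet_lt measurable_const hX.norm))

variable [InnerProductSpace ℝ H] [CompleteSpace H]

theorem norm_covApply_sub_covApply_truncation_le [IsProbabilityMeasure P] (hX : Measurable X)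
    (hX2 : MemLp X 2 P) (hmean : ∫ ω, X ω ∂P = 0) (a : ℝ) (y : H) :
    ‖covApply P X y - covApply P (fun ω => (if ‖X ω‖ ≤ a then X ω else 0) -
        ∫ ω', (if ‖X ω'‖ ≤ a then X ω' else 0) ∂P) y‖ ≤
      (tailMoment P X 2 a + tailMoment P X 1 a ^ 2) * ‖y‖ := by
  have hs : MeasurableSet {ω | a < ‖X ω‖} := measurableSet_lt measurable_const hX.norm
  rw [covApply_sub_const ((memLp_truncation hX hX2 a).integrable one_le_two),
    truncation_eq_sub_indicator, covApply_sub_covApply_sub_indicator hX2 hmean hs]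
  set m := ∫ ω in {ω | a < ‖X ω‖}, X ω ∂P
  have hbulk : ‖∫ ω in {ω | a < ‖X ω‖}, ⟪y, X ω⟫ • X ω ∂P‖ ≤ ‖y‖ * tailMoment P X 2 a := by
    rw [tailMoment, ← integral_const_mul]
    refine norm_integral_le_of_norm_le ?_ (ae_of_all _ fun ω => ?_)
    · simp_rw [Real.rpow_two]
      exact ((hX2.integrable_norm_pow two_ne_zero).const_mul ‖y‖).integrableOn
    · rw [norm_smul, Real.rpow_two, sq, ← mul_assoc]
      gcongr
      exact norm_inner_le_norm _ _
  have hm : ‖m‖ ≤ tailMoment P X 1 a := by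
    simp_rw [tailMoment, Real.rpow_one]
    exact norm_integral_le_integral_norm _
  have hrank_one : ‖⟪y, m⟫ • m‖ ≤ ‖y‖ * tailMoment P X 1 a ^ 2 :=
    calc ‖⟪y, m⟫ • m‖ ≤ ‖y‖ * ‖m‖ ^ 2 := by
          rw [norm_smul, sq, ← mul_assoc]
          gcongr
          exact norm_inner_le_norm _ _
      _ ≤ ‖y‖ * tailMoment P X 1 a ^ 2 := by gcongr
  calc _ ≤ _ := norm_add_le _ _
    _ ≤ ‖y‖ * tailMoment P X 2 a + ‖y‖ * tailMoment P X 1 a ^ 2 := add_le_add hbulk hrank_one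
    _ = (tailMoment P X 2 a + tailMoment P X 1 a ^ 2) * ‖y‖ := by ring

end Truncation

theorem LinearMap.norm_apply_le_of_norm_le_one {E F : Type*} [NormedAddCommGroup E]
    [NormedSpace ℝ E] [NormedAddCommGroup F] [NormedSpace ℝ F] (A : E →ₗ[ℝ] F) {δ : ℝ}
    (hA : ∀ y, ‖y‖ ≤ 1 → ‖A y‖ ≤ δ) (y : E) : ‖A y‖ ≤ δ * ‖y‖ := by
  rcases eq_or_ne y 0 with rfl | hy
  · simp
  have hy' : 0 < ‖y‖ := norm_pos_iff.2 hy
  have h := hA (‖y‖⁻¹ • y) (by rw [norm_smul, norm_inv, norm_norm, inv_mul_cancel₀ hy'.ne'])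
  rw [map_smul, norm_smul, norm_inv, norm_norm, inv_mul_le_iff₀ hy'] at h
  rwa [mul_comm] at h

theorem MeasureTheory.memLp_ofReal_of_lintegral_rpow_lt_top {Ω E : Type*} [MeasurableSpace Ω]
    {P : Measure Ω} [NormedAddCommGroup E] {X : Ω → E} (hX : AEStronglyMeasurable X P) {r : ℝ}
    (hr : 0 < r) (hmom : ∫⁻ ω, (‖X ω‖₊ : ℝ≥0∞) ^ r ∂P < ⊤) : MemLp X (ENNReal.ofReal r) P :=
  ⟨hX, (eLpNorm_lt_top_iff_lintegral_rpow_enorm_lt_top (by simpa using hr)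
    ENNReal.ofReal_ne_top).2 (by rwa [ENNReal.toReal_ofReal hr.le])⟩

section CovDiffNorm

variable {H : Type*} [NormedAddCommGroup H] [InnerProductSpace ℝ H] {Ω : Type*}
  [MeasurableSpace Ω] {P : Measure Ω} {X : Ω → H} {r : ℝ}

theorem covDiffNorm_nonneg (n : ℕ) : 0 ≤ covDiffNorm P X r n :=
  Real.sSup_nonneg fun _ ⟨_, _, hc⟩ => hc ▸ norm_nonneg _

variable [MeasurableSpace H] [BorelSpace H] [IsProbabilityMeasure P]

theorem memLp_trunc (hX : Measurable X) (hX2 : MemLp X 2 P) (r : ℝ) (n : ℕ) :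
    MemLp (trunc P X r n) 2 P :=
  (memLp_truncation hX hX2 _).sub (memLp_const _)

variable [CompleteSpace H] (hX : Measurable X) (hX2 : MemLp X 2 P) (hmean : ∫ ω, X ω ∂P = 0)
include hX hX2 hmean

theorem norm_covApply_sub_covApply_trunc_le_tailMoment {n : ℕ} {y : H} (hy : ‖y‖ ≤ 1) :
    ‖covApply P X y - covApply P (trunc P X r n) y‖ ≤
      tailMoment P X 2 ((n : ℝ) ^ (1 / r)) + tailMoment P X 1 ((n : ℝ) ^ (1 / r)) ^ 2 :=
  (norm_covApply_sub_covApply_truncation_le hX hX2 hmean _ y).trans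
    (mul_le_of_le_one_right (add_nonneg (tailMoment_nonneg _ _) (sq_nonneg _)) hy)

theorem covDiffNorm_le (n : ℕ) :
    covDiffNorm P X r n ≤ tailMoment P X 2 ((n : ℝ) ^ (1 / r)) +
      tailMoment P X 1 ((n : ℝ) ^ (1 / r)) ^ 2 :=
  Real.sSup_le
    (fun _ ⟨_, hy, hc⟩ => hc ▸ norm_covApply_sub_covApply_trunc_le_tailMoment hX hX2 hmean hy)
    (add_nonneg (tailMoment_nonneg _ _) (sq_nonneg _))

theorem norm_covApply_sub_covApply_trunc_le {n : ℕ} {y : H} (hy : ‖y‖ ≤ 1) :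
    ‖covApply P X y - covApply P (trunc P X r n) y‖ ≤ covDiffNorm P X r n :=
  le_csSup
    ⟨_, fun _ ⟨_, hz, hc⟩ => hc ▸ norm_covApply_sub_covApply_trunc_le_tailMoment hX hX2 hmean hz⟩
    ⟨y, hy, rfl⟩

theorem tendsto_rpow_mul_covDiffNorm (hr : 2 ≤ r) (hXr : Integrable (fun ω => ‖X ω‖ ^ r) P) :
    Tendsto (fun n : ℕ => (n : ℝ) ^ (1 - 2 / r) * covDiffNorm P X r n) atTop (𝓝 0) := by
  set T := fun n : ℕ => tailMoment P X r ((n : ℝ) ^ (1 / r))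
  have hT : Tendsto T atTop (𝓝 0) := (tendsto_tailMoment_atTop hX hXr).comp <|
    (tendsto_rpow_atTop (by positivity)).comp tendsto_natCast_atTop_atTop
  have hT' : Tendsto (fun n => T n + T n ^ 2) atTop (𝓝 0) := by simpa using hT.add (hT.pow 2)
  refine squeeze_zero' (Eventually.of_forall fun n => mul_nonneg (by positivity)
    (covDiffNorm_nonneg n)) ?_ hT'
  filter_upwards [eventually_ge_atTop 1] with n hn
  have hexp : (n : ℝ) ^ (1 - 2 / r) = ((n : ℝ) ^ (1 / r)) ^ (r - 2) := by
    rw [← Real.rpow_mul (by positivity)]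
    congr 1
    field_simp
  rw [hexp]
  calc ((n : ℝ) ^ (1 / r)) ^ (r - 2) * covDiffNorm P X r n
      ≤ ((n : ℝ) ^ (1 / r)) ^ (r - 2) * (tailMoment P X 2 ((n : ℝ) ^ (1 / r)) +
          tailMoment P X 1 ((n : ℝ) ^ (1 / r)) ^ 2) := by
        gcongr
        exact covDiffNorm_le hX hX2 hmean n
    _ ≤ T n + T n ^ 2 := rpow_mul_tailMoment_add_sq_le hX hXr hr
        (Real.one_le_rpow (by exact_mod_cast hn) (by positivity))

end CovDiffNorm

theorem statement16
    {H₀ : Type*} [NormedAddCommGroup H₀] [InnerProductSpace ℝ H₀]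
    [CompleteSpace H₀] [SecondCountableTopology H₀]
    [MeasurableSpace H₀] [BorelSpace H₀]
    {Ω : Type*} [MeasurableSpace Ω] (P : Measure Ω) [IsProbabilityMeasure P]
    (X : Ω → H₀) (hmeas : Measurable X)
    (hmean : ∫ ω', X ω' ∂P = 0)
    (r : ℝ) (hr : 2 ≤ r)
    (hmom : ∫⁻ ω', (‖X ω'‖₊ : ℝ≥0∞) ^ r ∂P < ⊤)
    -- spectral data of Var(X): orthonormal eigenvectors v_k, strictly decreasing
    -- eigenvalues λ_k
    (v : ℕ → H₀) (lam : ℕ → ℝ)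
    (hnorm : ∀ k, 1 ≤ k → ‖v k‖ = 1)
    (horth : ∀ j k, 1 ≤ j → 1 ≤ k → j ≠ k → ⟪v j, v k⟫ = 0)
    (heig : ∀ k, 1 ≤ k → covApply P X (v k) = lam k • v k)
    (hdec : ∀ k, 1 ≤ k → lam (k + 1) < lam k)
    (hcomplete : ∀ y : H₀, (∀ k, 1 ≤ k → ⟪v k, y⟫ = 0) → covApply P X y = 0)
    -- spectral data of Var(X̃) for every truncation level: orthonormal eigenvectors ṽ_k
    -- with nonincreasing eigenvalues λ̃_k
    (vt : ℕ → ℕ → H₀) (lamt : ℕ → ℕ → ℝ)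
    (htnorm : ∀ n k, 1 ≤ k → ‖vt n k‖ = 1)
    (htorth : ∀ n j k, 1 ≤ j → 1 ≤ k → j ≠ k → ⟪vt n j, vt n k⟫ = 0)
    (hteig : ∀ n k, 1 ≤ k → covApply P (trunc P X r n) (vt n k) = lamt n k • vt n k)
    (htdec : ∀ n k, 1 ≤ k → lamt n (k + 1) ≤ lamt n k)
    (htcomplete : ∀ n (y : H₀), (∀ k, 1 ≤ k → ⟪vt n k, y⟫ = 0) →
      covApply P (trunc P X r n) y = 0) :
    -- with c_k = sgn ⟨v_k, ṽ_k⟩: the explicit bound, and the rate o(n^{-(1-2/r)})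
    ∀ k : ℕ, 1 ≤ k →
      (∀ n : ℕ,
        ‖vt n k - Real.sign ⟪v k, vt n k⟫ • v k‖ ≤
          (2 * Real.sqrt 2 / specGap lam k) * covDiffNorm P X r n)
      ∧ Tendsto (fun n : ℕ =>
          (n : ℝ) ^ (1 - 2/r) * ‖vt n k - Real.sign ⟪v k, vt n k⟫ • v k‖) atTop (𝓝 0) := by
  intro k hk
  have hr0 : 0 < r := by linarith
  have hXLr := memLp_ofReal_of_lintegral_rpow_lt_top hmeas.aestronglyMeasurable hr0 hmom
  have hX2 : MemLp X 2 P :=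
    hXLr.mono_exponent (by simpa using ENNReal.ofReal_le_ofReal hr)
  let D := covEigenSystem hX2 v lam hnorm horth heig
    (antitoneOn_of_add_one_le Set.ordConnected_Ici fun a _ ha _ => (hdec a ha).le) hcomplete
  let D' (n : ℕ) := covEigenSystem (memLp_trunc hmeas hX2 r n) (vt n) (lamt n) (htnorm n)
    (htorth n) (hteig n) (antitoneOn_of_add_one_le Set.ordConnected_Ici fun a _ ha _ =>
      htdec n a ha) (htcomplete n)
  have hbound (n : ℕ) := D.norm_vec_sub_sign_smul_vec_le (D' n)
    (strictAntiOn_of_add_one_lt Set.ordConnected_Ici fun a _ ha _ => hdec a ha)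
    ((D.op - (D' n).op).norm_apply_le_of_norm_le_one
      fun y hy => norm_covApply_sub_covApply_trunc_le hmeas hX2 hmean hy) hk
  refine ⟨hbound, ?_⟩
  have hrate := tendsto_rpow_mul_covDiffNorm hmeas hX2 hmean hr
    (by simpa [ENNReal.toReal_ofReal hr0.le] using hXLr.integrable_norm_rpow')
  refine squeeze_zero (fun n => by positivity) (fun n => ?_)
    (by simpa using hrate.const_mul (2 * √2 / specGap lam k))
  calc (n : ℝ) ^ (1 - 2 / r) * ‖vt n k - Real.sign ⟪v k, vt n k⟫ • v k‖
      ≤ (n : ℝ) ^ (1 - 2 / r) * (2 * √2 / specGap lam k * covDiffNorm P X r n) := by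
        gcongr; exact hbound n
    _ = 2 * √2 / specGap lam k * ((n : ℝ) ^ (1 - 2 / r) * covDiffNorm P X r n) := by ring

end
end

section
/- Let X₁,…,X_n be independent zero-mean random elements with values in a complex separable Hilbert space H such that ‖X_t‖ ≤ b almost surely for some b > 0, and such that P(‖X_t‖ ≠ 0) = p for each t. Let S_n = X₁ + … + X_n. Then for every x ≥ 0 and every β ∈ ℝ: P(‖S_n‖ ≥ x) ≤ 2 e^{−(x²/b²) β} [ 1 + p ( e^{(x²/(2b²)) β²} − 1 ) ]^n. -/
/-!
The function `s ↦ cosh √s` has a power series with nonnegative coefficients, hence is convex on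
`[0, ∞)`. If `‖x‖ ≤ b`, then `‖a + x‖² ≤ ‖a‖² + 2 Re⟪a, x⟫ + b²`, and comparing with the chord of
`c ↦ cosh √(‖a‖² + 2c + b²)` between `c = ± ‖a‖ b` gives
`cosh ‖a + x‖ ≤ cosh ‖a‖ cosh b + C · Re⟪a, x⟫` with `C` independent of `x`.
Averaging over a zero-mean `X` which vanishes with probability `1 - p` kills the linear term, so
`E cosh ‖a + X‖ ≤ (1 + p (cosh b - 1)) cosh ‖a‖`, and independence iterates this to
`E cosh (θ ‖S_n‖) ≤ (1 + p (cosh (θ b) - 1))ⁿ`. Markov's inequality, `cosh y ≥ eʸ / 2` and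
`cosh y ≤ exp (y² / 2)` with `θ = x |β| / b²` give the claim.
-/

open MeasureTheory ProbabilityTheory Real
open scoped ENNReal InnerProductSpace

namespace Real

theorem convexOn_cosh_sqrt : ConvexOn ℝ (Set.Ici 0) fun s => cosh √s := by
  have hasSum_cosh_sqrt : ∀ s : ℝ, 0 ≤ s → HasSum (fun n => s ^ n / (2 * n).factorial) (cosh √s) :=
    fun s hs => by simpa only [pow_mul, sq_sqrt hs] using hasSum_cosh √s
  refine ⟨convex_Ici 0, fun x hx y hy θ η hθ hη hθη => ?_⟩
  refine hasSum_le (fun n => ?_) (hasSum_cosh_sqrt _ (convex_Ici 0 hx hy hθ hη hθη))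
    (((hasSum_cosh_sqrt x hx).mul_left θ).add ((hasSum_cosh_sqrt y hy).mul_left η))
  rw [mul_div_assoc', mul_div_assoc', ← add_div]
  gcongr
  exact (convexOn_pow n).2 hx hy hθ hη hθη

theorem cosh_sqrt_le_of_abs_le_mul {A b c : ℝ} (hA : 0 ≤ A) (hc : |c| ≤ A * b) :
    cosh √(A ^ 2 + 2 * c + b ^ 2) ≤ cosh A * cosh b + sinh A * sinh b / (A * b) * c := by
  have hAb : 0 ≤ A * b := (abs_nonneg c).trans hc
  rcases hAb.eq_or_lt with hAb0 | hAb0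
  · have hc0 : c = 0 := abs_nonpos_iff.1 (hAb0 ▸ hc)
    have hsinh : sinh A * sinh b = 0 := by
      rcases mul_eq_zero.1 hAb0.symm with h | h <;> simp [h]
    rw [hc0, show A ^ 2 + 2 * 0 + b ^ 2 = (A + b) ^ 2 by linear_combination 2 * hAb0,
      sqrt_sq_eq_abs, cosh_abs, cosh_add, hsinh]
    simp
  · -- `A² + 2c + b²` is a convex combination of `(A - b)²` and `(A + b)²`
    obtain ⟨hA0, hb0⟩ := mul_ne_zero_iff.1 hAb0.ne'
    have hθ : 0 ≤ (A * b - c) / (2 * (A * b)) :=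
      div_nonneg (by linarith [le_abs_self c]) (by positivity)
    have hη : 0 ≤ (A * b + c) / (2 * (A * b)) :=
      div_nonneg (by linarith [neg_abs_le c]) (by positivity)
    have hchord := convexOn_cosh_sqrt.2 (sq_nonneg (A - b)) (sq_nonneg (A + b)) hθ hη
      (by field_simp; ring)
    have hpoint : (A * b - c) / (2 * (A * b)) * (A - b) ^ 2 +
        (A * b + c) / (2 * (A * b)) * (A + b) ^ 2 = A ^ 2 + 2 * c + b ^ 2 := by
      field_simp; ring
    have hvalue : (A * b - c) / (2 * (A * b)) * (cosh A * cosh b - sinh A * sinh b) +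
        (A * b + c) / (2 * (A * b)) * (cosh A * cosh b + sinh A * sinh b)
        = cosh A * cosh b + sinh A * sinh b / (A * b) * c := by
      field_simp; ring
    simp only [smul_eq_mul, sqrt_sq_eq_abs, cosh_abs, cosh_sub, cosh_add] at hchord
    rwa [hpoint, hvalue] at hchord

end Real

theorem cosh_norm_add_le {𝕜 E : Type*} [RCLike 𝕜] [NormedAddCommGroup E] [InnerProductSpace 𝕜 E]
    (a : E) {x : E} {b : ℝ} (hx : ‖x‖ ≤ b) :
    cosh ‖a + x‖ ≤
      cosh ‖a‖ * cosh b + sinh ‖a‖ * sinh b / (‖a‖ * b) * RCLike.re ⟪a, x⟫_𝕜 := by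
  have hre : |RCLike.re ⟪a, x⟫_𝕜| ≤ ‖a‖ * b :=
    (RCLike.abs_re_le_norm _).trans ((norm_inner_le_norm a x).trans (by gcongr))
  refine le_trans ?_ (cosh_sqrt_le_of_abs_le_mul (norm_nonneg a) hre)
  rw [cosh_le_cosh, abs_of_nonneg (sqrt_nonneg _)]
  refine abs_le_sqrt ?_
  rw [norm_add_sq (𝕜 := 𝕜)]
  gcongr

section Probability

variable {Ω : Type*} [MeasurableSpace Ω] {P : Measure Ω}
  {H : Type*} [NormedAddCommGroup H] [MeasurableSpace H] [BorelSpace H]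

theorem integrable_cosh_norm_add [IsFiniteMeasure P] {Y : Ω → H} (hY : Measurable Y) {b : ℝ}
    (hbd : ∀ᵐ ω ∂P, ‖Y ω‖ ≤ b) (a : H) : Integrable (fun ω => cosh ‖a + Y ω‖) P := by
  refine .of_bound (by fun_prop : Measurable fun ω => cosh ‖a + Y ω‖).aestronglyMeasurable
    (cosh (‖a‖ + b)) ?_
  filter_upwards [hbd] with ω hω
  rw [norm_of_nonneg (cosh_pos _).le, cosh_le_cosh, abs_of_nonneg (norm_nonneg _),
    abs_of_nonneg (by linarith [norm_nonneg a, norm_nonneg (Y ω)])]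
  exact (norm_add_le a (Y ω)).trans (by gcongr)

variable [IsProbabilityMeasure P]
  [InnerProductSpace ℂ H] [SecondCountableTopology H] [CompleteSpace H]

theorem integral_cosh_norm_add_le {Y : Ω → H} (hY : Measurable Y) (hmean : ∫ ω, Y ω ∂P = 0)
    {b p : ℝ} (hbd : ∀ᵐ ω ∂P, ‖Y ω‖ ≤ b) (hp : P.real {ω | Y ω ≠ 0} ≤ p) (a : H) :
    ∫ ω, cosh ‖a + Y ω‖ ∂P ≤ (1 + p * (cosh b - 1)) * cosh ‖a‖ := by
  set C := sinh ‖a‖ * sinh b / (‖a‖ * b)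
  set D := (cosh b - 1) * cosh ‖a‖
  have hD : 0 ≤ D := mul_nonneg (sub_nonneg.2 (one_le_cosh b)) (cosh_pos _).le
  have hYint : Integrable Y P := .of_bound hY.aestronglyMeasurable b hbd
  have hnz : MeasurableSet {ω | Y ω ≠ 0} := (measurableSet_singleton 0).compl.preimage hY
  have hmajor : ∀ᵐ ω ∂P, cosh ‖a + Y ω‖ ≤
      cosh ‖a‖ + {ω | Y ω ≠ 0}.indicator (fun _ => D) ω + C * RCLike.re ⟪a, Y ω⟫_ℂ := by
    filter_upwards [hbd] with ω hω
    by_cases h0 : Y ω = 0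
    · simp [h0]
    · rw [Set.indicator_of_mem h0]
      linarith [cosh_norm_add_le (𝕜 := ℂ) a hω]
  have hinner : Integrable (fun ω => ⟪a, Y ω⟫_ℂ) P := hYint.const_inner a
  have hstep : Integrable (fun ω => cosh ‖a‖ + {ω | Y ω ≠ 0}.indicator (fun _ => D) ω) P :=
    (integrable_const _).add ((integrable_const _).indicator hnz)
  calc ∫ ω, cosh ‖a + Y ω‖ ∂P
      ≤ ∫ ω, (cosh ‖a‖ + {ω | Y ω ≠ 0}.indicator (fun _ => D) ω + C * RCLike.re ⟪a, Y ω⟫_ℂ) ∂P :=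
        integral_mono_ae (integrable_cosh_norm_add hY hbd a) (hstep.add (hinner.re.const_mul C))
          hmajor
    _ = cosh ‖a‖ + P.real {ω | Y ω ≠ 0} * D := by
        rw [integral_add hstep (hinner.re.const_mul C),
          integral_add (integrable_const _) ((integrable_const _).indicator hnz),
          integral_const_mul, integral_re hinner, integral_inner hYint, hmean,
          integral_const, integral_indicator_const _ hnz]
        simp
    _ ≤ (1 + p * (cosh b - 1)) * cosh ‖a‖ := by
        linarith [mul_le_mul_of_nonneg_right hp hD]

theorem lintegral_cosh_norm_add_le {Y : Ω → H} (hY : Measurable Y) (hmean : ∫ ω, Y ω ∂P = 0)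
    {b p : ℝ} (hbd : ∀ᵐ ω ∂P, ‖Y ω‖ ≤ b) (hp : P.real {ω | Y ω ≠ 0} ≤ p) (a : H) :
    ∫⁻ ω, ENNReal.ofReal (cosh ‖a + Y ω‖) ∂P ≤
      ENNReal.ofReal (1 + p * (cosh b - 1)) * ENNReal.ofReal (cosh ‖a‖) := by
  have hc : 0 ≤ 1 + p * (cosh b - 1) :=
    add_nonneg zero_le_one (mul_nonneg (measureReal_nonneg.trans hp) (sub_nonneg.2 (one_le_cosh b)))
  rw [← ofReal_integral_eq_lintegral_ofReal (integrable_cosh_norm_add hY hbd a)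
    (ae_of_all _ fun _ => (cosh_pos _).le), ← ENNReal.ofReal_mul hc]
  exact ENNReal.ofReal_le_ofReal (integral_cosh_norm_add_le hY hmean hbd hp a)

theorem lintegral_cosh_norm_sum_le {ι : Type*} {X : ι → Ω → H} (hX : ∀ t, Measurable (X t))
    (hindep : iIndepFun X P) (hmean : ∀ t, ∫ ω, X t ω ∂P = 0) {b p : ℝ}
    (hbd : ∀ t, ∀ᵐ ω ∂P, ‖X t ω‖ ≤ b) (hp : ∀ t, P.real {ω | X t ω ≠ 0} ≤ p) (s : Finset ι) :
    ∫⁻ ω, ENNReal.ofReal (cosh ‖∑ t ∈ s, X t ω‖) ∂P ≤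
      ENNReal.ofReal (1 + p * (cosh b - 1)) ^ s.card := by
  classical
  induction s using Finset.induction_on with
  | empty => simp
  | insert t s ht ih =>
    set c := ENNReal.ofReal (1 + p * (cosh b - 1))
    have hf : Measurable fun z : H => ENNReal.ofReal (cosh ‖z‖) := by fun_prop
    have hA : Measurable (∑ u ∈ s, X u) := by
      rw [Finset.sum_fn]; exact Finset.measurable_sum s fun u _ => hX u
    have hlaw : P.map (∑ u ∈ s, X u + X t) = P.map (∑ u ∈ s, X u) ∗ P.map (X t) :=
      (hindep.indepFun_finsetSum_of_notMem hX ht).map_add_eq_map_conv_map hA (hX t)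
    calc ∫⁻ ω, ENNReal.ofReal (cosh ‖∑ u ∈ insert t s, X u ω‖) ∂P
        = ∫⁻ z, ENNReal.ofReal (cosh ‖z‖) ∂(P.map (∑ u ∈ s, X u + X t)) := by
          rw [lintegral_map hf (hA.add (hX t))]
          simp only [Finset.sum_insert ht, Pi.add_apply, Finset.sum_apply, add_comm]
      _ = ∫⁻ a, ∫⁻ ω, ENNReal.ofReal (cosh ‖a + X t ω‖) ∂P ∂(P.map (∑ u ∈ s, X u)) := by
          rw [hlaw, Measure.lintegral_conv hf]
          exact lintegral_congr fun a => lintegral_map (by fun_prop) (hX t)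
      _ ≤ ∫⁻ a, c * ENNReal.ofReal (cosh ‖a‖) ∂(P.map (∑ u ∈ s, X u)) :=
          lintegral_mono fun a => lintegral_cosh_norm_add_le (hX t) (hmean t) (hbd t) (hp t) a
      _ ≤ c * c ^ s.card := by
          rw [lintegral_const_mul _ hf, lintegral_map hf hA]
          simpa only [Finset.sum_apply] using mul_le_mul_right ih c
      _ = c ^ (insert t s).card := by rw [Finset.card_insert_of_notMem ht, pow_succ']

theorem measureReal_le_two_mul_exp_of_lintegral_cosh_le {W : Ω → ℝ} (hW : Measurable W) {θ x M : ℝ}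
    (hθ : 0 ≤ θ) (hx : 0 ≤ x) (hM : ∫⁻ ω, ENNReal.ofReal (cosh (θ * W ω)) ∂P ≤ ENNReal.ofReal M) :
    P.real {ω | x ≤ W ω} ≤ 2 * exp (-(θ * x)) * M := by
  have hM1 : 1 ≤ M := by
    refine ENNReal.one_le_ofReal.1 (le_trans ?_ hM)
    calc (1 : ℝ≥0∞) = ∫⁻ _, 1 ∂P := by simp
      _ ≤ _ := lintegral_mono fun ω => ENNReal.one_le_ofReal.2 (one_le_cosh _)
  have hmarkov : ENNReal.ofReal (cosh (θ * x)) * P {ω | x ≤ W ω} ≤ ENNReal.ofReal M :=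
    calc ENNReal.ofReal (cosh (θ * x)) * P {ω | x ≤ W ω}
        ≤ ENNReal.ofReal (cosh (θ * x)) *
            P {ω | ENNReal.ofReal (cosh (θ * x)) ≤ ENNReal.ofReal (cosh (θ * W ω))} := by
          refine mul_le_mul_right (measure_mono fun ω (hω : x ≤ W ω) => ?_) _
          refine ENNReal.ofReal_le_ofReal (cosh_le_cosh.2 ?_)
          rw [abs_of_nonneg (by positivity), abs_of_nonneg (by nlinarith : 0 ≤ θ * W ω)]
          exact mul_le_mul_of_nonneg_left hω hθ
      _ ≤ ∫⁻ ω, ENNReal.ofReal (cosh (θ * W ω)) ∂P :=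
          mul_meas_ge_le_lintegral₀ (by fun_prop) _
      _ ≤ ENNReal.ofReal M := hM
  have hmarkov' : cosh (θ * x) * P.real {ω | x ≤ W ω} ≤ M := by
    simpa [ENNReal.toReal_mul, (cosh_pos _).le, measureReal_def, hM1.trans' zero_le_one]
      using ENNReal.toReal_mono ENNReal.ofReal_ne_top hmarkov
  have hfactor : 1 ≤ 2 * exp (-(θ * x)) * cosh (θ * x) := by
    have : exp (-(θ * x)) * exp (θ * x) = 1 := by rw [← exp_add, neg_add_cancel, exp_zero]
    rw [cosh_eq]
    nlinarith [exp_pos (-(θ * x))]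
  calc P.real {ω | x ≤ W ω} ≤ 2 * exp (-(θ * x)) * cosh (θ * x) * P.real {ω | x ≤ W ω} :=
        le_mul_of_one_le_left measureReal_nonneg hfactor
    _ ≤ 2 * exp (-(θ * x)) * M := by
        rw [mul_assoc]
        gcongr

end Probability

theorem statement18_general
    {H : Type*} [NormedAddCommGroup H] [InnerProductSpace ℂ H]
    [CompleteSpace H] [SecondCountableTopology H]
    [MeasurableSpace H] [BorelSpace H]
    {Ω : Type*} [MeasurableSpace Ω] (P : Measure Ω) [IsProbabilityMeasure P]
    (n : ℕ)
    -- independent zero-mean random elements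
    (X : Fin n → Ω → H) (hmeas : ∀ t, Measurable (X t))
    (hindep : iIndepFun X P)
    (hmean : ∀ t, ∫ ω', X t ω' ∂P = 0)
    -- ‖X_t‖ ≤ b almost surely
    (b : ℝ)
    (hbound : ∀ t, ∀ᵐ ω' ∂P, ‖X t ω'‖ ≤ b)
    -- P(‖X_t‖ ≠ 0) = p for each t
    (p : ℝ) (hp : 0 ≤ p)
    (hpt : ∀ t, P {ω' | X t ω' ≠ 0} = ENNReal.ofReal p) :
    -- the tail bound for S_n = X₁ + … + X_n
    ∀ x : ℝ, 0 ≤ x → ∀ β : ℝ,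
      (P {ω' | x ≤ ‖∑ t : Fin n, X t ω'‖}).toReal ≤
        2 * Real.exp (-(x ^ 2 / b ^ 2) * β) *
          (1 + p * (Real.exp ((x ^ 2 / (2 * b ^ 2)) * β ^ 2) - 1)) ^ n := by
  intro x hx β
  set θ := x * |β| / b ^ 2 with hθ_def
  have hθ : 0 ≤ θ := by positivity
  have hc : 0 ≤ 1 + p * (cosh (θ * b) - 1) := by
    have := one_le_cosh (θ * b)
    positivity
  have hpX : ∀ t, P.real {ω | X t ω ≠ 0} = p := fun t => by
    rw [measureReal_def, hpt t, ENNReal.toReal_ofReal hp]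
  have hmoment := lintegral_cosh_norm_sum_le (X := fun t ω => θ • X t ω) (b := θ * b) (p := p)
    (fun t => (hmeas t).const_smul θ)
    (hindep.comp (fun _ v => θ • v) fun _ => measurable_const_smul θ)
    (fun t => by rw [integral_smul, hmean t, smul_zero])
    (fun t => (hbound t).mono fun ω hω => by rw [norm_smul, norm_of_nonneg hθ]; gcongr)
    (fun t => (measureReal_mono fun ω hω => right_ne_zero_of_smul hω).trans_eq (hpX t))
    Finset.univ
  simp only [← Finset.smul_sum, norm_smul, norm_of_nonneg hθ, Finset.card_univ, Fintype.card_fin,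
    ← ENNReal.ofReal_pow hc] at hmoment
  refine (measureReal_le_two_mul_exp_of_lintegral_cosh_le (by fun_prop) hθ hx hmoment).trans ?_
  gcongr
  · have hθx : θ * x = x ^ 2 / b ^ 2 * |β| := by ring
    rw [hθx, neg_mul]
    exact neg_le_neg (mul_le_mul_of_nonneg_left (le_abs_self β) (by positivity))
  · refine (cosh_le_exp_half_sq _).trans_eq (congrArg exp ?_)
    rw [hθ_def]
    field_simp
    rw [sq_abs]

theorem statement18
    {H : Type*} [NormedAddCommGroup H] [InnerProductSpace ℂ H]
    [CompleteSpace H] [SecondCountableTopology H]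
    [MeasurableSpace H] [BorelSpace H]
    {Ω : Type*} [MeasurableSpace Ω] (P : Measure Ω) [IsProbabilityMeasure P]
    (n : ℕ)
    -- independent zero-mean random elements
    (X : Fin n → Ω → H) (hmeas : ∀ t, Measurable (X t))
    (hindep : iIndepFun X P)
    (hmean : ∀ t, ∫ ω', X t ω' ∂P = 0)
    -- ‖X_t‖ ≤ b almost surely
    (b : ℝ) (hb : 0 < b)
    (hbound : ∀ t, ∀ᵐ ω' ∂P, ‖X t ω'‖ ≤ b)
    -- P(‖X_t‖ ≠ 0) = p for each t
    (p : ℝ) (hp : 0 ≤ p)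
    (hpt : ∀ t, P {ω' | X t ω' ≠ 0} = ENNReal.ofReal p) :
    -- the tail bound for S_n = X₁ + … + X_n
    ∀ x : ℝ, 0 ≤ x → ∀ β : ℝ,
      (P {ω' | x ≤ ‖∑ t : Fin n, X t ω'‖}).toReal ≤
        2 * Real.exp (-(x ^ 2 / b ^ 2) * β) *
          (1 + p * (Real.exp ((x ^ 2 / (2 * b ^ 2)) * β ^ 2) - 1)) ^ n :=
  statement18_general P n X hmeas hindep hmean b hbound p hp hpt
end
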